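/- The radial convex cone generated by a σ-compact subset G of the product cone C[X₁]×C[X₂] is itself σ-compact; in particular, a finite Radon measure α is concentrated on a Borel set whose generated radial convex cone is H-cyclically monotone if and only if α is concentrated on a σ-compact H-cyclically monotone radial convex cone. -/

import Mathlib

open MeasureTheory Topology Filter Set
open scoped NNReal ENNReal BoundedContinuousFunction

noncomputable section

namespace UOT

variable (X : Type*)

/-- The equivalence relation on `X × ℝ≥0` identifying all points with radius `0`. -/
def coneSetoid : Setoid (X × ℝ≥0) where
  r p q := p = q ∨ (p.2 = 0 ∧ q.2 = 0)
  iseqv := by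
    refine ⟨fun p => Or.inl rfl, ?_, ?_⟩
    · rintro p q (rfl | h)
      · exact Or.inl rfl
      · exact Or.inr ⟨h.2, h.1⟩
    · rintro p q r hpq hqr
      rcases hpq with rfl | h
      · exact hqr
      · rcases hqr with rfl | h'
        · exact Or.inr h
        · exact Or.inr ⟨h.1, h'.2⟩

/-- The geometric cone over `X`. -/
def Cone := Quotient (coneSetoid X)

/-- The canonical map sending `(x, r)` to the point `[x, r]` of the cone. -/
def Cone.mk (x : X) (r : ℝ≥0) : Cone X := Quotient.mk (coneSetoid X) (x, r)

/-- The vertex `o` of the cone. -/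
def Cone.vertex [Nonempty X] : Cone X := Cone.mk X (Classical.arbitrary X) 0

/-- The radial coordinate `r` of a point of the cone. -/
def Cone.radius : Cone X → ℝ≥0 :=
  Quotient.lift (fun p => p.2) (by
    rintro p q (rfl | ⟨h1, h2⟩)
    · rfl
    · simp [h1, h2])

/-- The base point `x` of a point of the cone (an arbitrary point of `X` at the vertex). -/
def Cone.basePt [Nonempty X] : Cone X → X :=
  Quotient.lift (fun p => if p.2 = 0 then Classical.arbitrary X else p.1) (by
    rintro p q (rfl | ⟨h1, h2⟩)
    · rfl
    · simp [h1, h2])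

/-- Radial rescaling `λ • [x, r] = [x, λ * r]` on the cone. -/
def Cone.smul (c : ℝ≥0) : Cone X → Cone X :=
  Quotient.lift (fun p => Cone.mk X p.1 (c * p.2)) (by
    rintro p q (rfl | ⟨h1, h2⟩)
    · rfl
    · apply Quotient.sound
      exact Or.inr ⟨by simp [h1], by simp [h2]⟩)

variable [TopologicalSpace X]

/-- The cone topology: a set is open iff its preimage in `X × ℝ≥0` is open and, when it
contains the vertex, it contains a whole strip `{[x, r] : r < ε}`. -/
instance : TopologicalSpace (Cone X) where
  IsOpen U := IsOpen ((fun p : X × ℝ≥0 => Cone.mk X p.1 p.2) ⁻¹' U) ∧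
      ∀ x : X, Cone.mk X x 0 ∈ U →
        ∃ ε : ℝ≥0, 0 < ε ∧ ∀ (y : X) (r : ℝ≥0), r < ε → Cone.mk X y r ∈ U
  isOpen_univ := ⟨isOpen_univ, fun _ _ => ⟨1, one_pos, fun _ _ _ => mem_univ _⟩⟩
  isOpen_inter := by
    rintro s t ⟨hs1, hs2⟩ ⟨ht1, ht2⟩
    refine ⟨hs1.inter ht1, fun x hx => ?_⟩
    obtain ⟨ε₁, hε₁, h₁⟩ := hs2 x hx.1
    obtain ⟨ε₂, hε₂, h₂⟩ := ht2 x hx.2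
    exact ⟨min ε₁ ε₂, lt_min hε₁ hε₂, fun y r hr =>
      ⟨h₁ y r (hr.trans_le (min_le_left _ _)), h₂ y r (hr.trans_le (min_le_right _ _))⟩⟩
  isOpen_sUnion := by
    intro S hS
    constructor
    · rw [Set.preimage_sUnion]
      exact isOpen_biUnion fun t ht => (hS t ht).1
    · intro x hx
      obtain ⟨t, ht, hxt⟩ := hx
      obtain ⟨ε, hε, h⟩ := (hS t ht).2 x hxt
      exact ⟨ε, hε, fun y r hr => ⟨t, ht, h y r hr⟩⟩

instance : MeasurableSpace (Cone X) := borel (Cone X)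

instance : BorelSpace (Cone X) := ⟨rfl⟩

/-- On a product of cones we use the Borel σ-algebra of the product topology. -/
instance (priority := 2000) prodConeMeasurableSpace (X₁ X₂ : Type*) [TopologicalSpace X₁]
    [TopologicalSpace X₂] : MeasurableSpace (Cone X₁ × Cone X₂) :=
  borel (Cone X₁ × Cone X₂)

instance (priority := 2000) prodConeBorelSpace (X₁ X₂ : Type*) [TopologicalSpace X₁]
    [TopologicalSpace X₂] : BorelSpace (Cone X₁ × Cone X₂) := ⟨rfl⟩

variable {X}

/-- The scaled Dirac measure `r • δ_x` as a finite measure. -/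
def diracFM {Y : Type*} [MeasurableSpace Y] (x : Y) : FiniteMeasure Y :=
  ⟨Measure.dirac x, inferInstance⟩

/-- The canonical map `[x, r] ↦ r • δ_x` from the cone to finite measures. -/
def coneToFM (X : Type*) [TopologicalSpace X] [MeasurableSpace X] :
    Cone X → FiniteMeasure X :=
  Quotient.lift (fun p : X × ℝ≥0 => p.2 • diracFM p.1) (by
    rintro p q (rfl | ⟨h1, h2⟩)
    · rfl
    · simp [h1, h2])

/-- A finite measure is discrete if it is a finite nonnegative combination of Dirac masses. -/
def IsDiscreteFM {Y : Type*} [MeasurableSpace Y] (μ : FiniteMeasure Y) : Prop :=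
  ∃ (n : ℕ) (c : Fin n → ℝ≥0) (x : Fin n → Y), μ = ∑ i, c i • diracFM (x i)

section Product

variable {X₁ X₂ : Type*} [TopologicalSpace X₁] [TopologicalSpace X₂]

/-- Radial `1`-homogeneity of a cost function on the product cone. -/
def RadiallyHomogeneous (H : Cone X₁ × Cone X₂ → ℝ≥0∞) : Prop :=
  ∀ (x₁ : X₁) (x₂ : X₂) (r₁ r₂ lam : ℝ≥0), 0 < lam →
    H (Cone.mk X₁ x₁ (lam * r₁), Cone.mk X₂ x₂ (lam * r₂)) =
      (lam : ℝ≥0∞) * H (Cone.mk X₁ x₁ r₁, Cone.mk X₂ x₂ r₂)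

/-- Radial convexity of a cost function on the product cone: every radial section is convex. -/
def RadiallyConvex (H : Cone X₁ × Cone X₂ → ℝ≥0∞) : Prop :=
  ∀ (x₁ : X₁) (x₂ : X₂) (a₁ a₂ b₁ b₂ t : ℝ≥0), t ≤ 1 →
    H (Cone.mk X₁ x₁ (t * a₁ + (1 - t) * b₁), Cone.mk X₂ x₂ (t * a₂ + (1 - t) * b₂)) ≤
      (t : ℝ≥0∞) * H (Cone.mk X₁ x₁ a₁, Cone.mk X₂ x₂ a₂) +
        ((1 - t : ℝ≥0) : ℝ≥0∞) * H (Cone.mk X₁ x₁ b₁, Cone.mk X₂ x₂ b₂)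

/-- Properness: `H` is not identically `+∞`. -/
def ProperCost (H : Cone X₁ × Cone X₂ → ℝ≥0∞) : Prop := ∃ y, H y ≠ ⊤

variable [MeasurableSpace X₁] [MeasurableSpace X₂]

/-- First `p`-homogeneous marginal `h₁^p(α) = (x₁)_♯ (r₁^p · α)`. -/
def homMarginalFst [Nonempty X₁] (p : ℝ) (α : Measure (Cone X₁ × Cone X₂)) : Measure X₁ :=
  Measure.map (fun y : Cone X₁ × Cone X₂ => Cone.basePt X₁ y.1)
    (α.withDensity fun y => (Cone.radius X₁ y.1 : ℝ≥0∞) ^ p)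

/-- Second `p`-homogeneous marginal `h₂^p(α) = (x₂)_♯ (r₂^p · α)`. -/
def homMarginalSnd [Nonempty X₂] (p : ℝ) (α : Measure (Cone X₁ × Cone X₂)) : Measure X₂ :=
  Measure.map (fun y : Cone X₁ × Cone X₂ => Cone.basePt X₂ y.2)
    (α.withDensity fun y => (Cone.radius X₂ y.2 : ℝ≥0∞) ^ p)

variable [Nonempty X₁] [Nonempty X₂]

/-- `α ∈ H^p(μ₁, μ₂)`: a (finite Radon) homogeneous coupling with finite `p`-th radial
moments and `p`-homogeneous marginals `μ₁, μ₂`. -/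
def IsHomCoupling (p : ℝ) (α : Measure (Cone X₁ × Cone X₂))
    (μ₁ : Measure X₁) (μ₂ : Measure X₂) : Prop :=
  IsFiniteMeasure α ∧
    (∫⁻ y, ((Cone.radius X₁ y.1 : ℝ≥0∞) ^ p + (Cone.radius X₂ y.2 : ℝ≥0∞) ^ p) ∂α) ≠ ⊤ ∧
    homMarginalFst p α = μ₁ ∧ homMarginalSnd p α = μ₂

/-- The unbalanced optimal transport cost `U_H`. -/
def UH (H : Cone X₁ × Cone X₂ → ℝ≥0∞) (μ₁ : Measure X₁) (μ₂ : Measure X₂) : ℝ≥0∞ :=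
  ⨅ (α : Measure (Cone X₁ × Cone X₂)) (_ : IsHomCoupling 1 α μ₁ μ₂), ∫⁻ y, H y ∂α

/-- The truncated product cone `C_R[X₁, X₂]`: both radii at most `R`. -/
def prodConeTrunc (R : ℝ≥0) : Set (Cone X₁ × Cone X₂) :=
  {y | Cone.radius X₁ y.1 ≤ R ∧ Cone.radius X₂ y.2 ≤ R}

/-- Membership of a pair of bounded continuous potentials in the dual constraint set `Φ_H`. -/
def InPhi (H : Cone X₁ × Cone X₂ → ℝ≥0∞) (φ₁ : X₁ →ᵇ ℝ) (φ₂ : X₂ →ᵇ ℝ) : Prop :=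
  ∀ (x₁ : X₁) (x₂ : X₂) (r₁ r₂ : ℝ≥0),
    ENNReal.ofReal (φ₁ x₁ * r₁ + φ₂ x₂ * r₂) ≤ H (Cone.mk X₁ x₁ r₁, Cone.mk X₂ x₂ r₂)

/-- `H`-cyclical monotonicity of a subset of the product cone. -/
def HCyclicallyMonotone (H : Cone X₁ × Cone X₂ → ℝ≥0∞)
    (Γ : Set (Cone X₁ × Cone X₂)) : Prop :=
  ∀ (N : ℕ) (y : Fin N → Cone X₁ × Cone X₂), (∀ i, y i ∈ Γ) → ∀ σ : Equiv.Perm (Fin N),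
    ∑ i, H (y i) ≤ ∑ i, H ((y i).1, (y (σ i)).2)

/-- A radial convex cone in the product cone. -/
def IsRadialConvexCone (Γ : Set (Cone X₁ × Cone X₂)) : Prop :=
  ∀ (x₁ : X₁) (x₂ : X₂) (a₁ a₂ b₁ b₂ lam mu : ℝ≥0),
    (Cone.mk X₁ x₁ a₁, Cone.mk X₂ x₂ a₂) ∈ Γ → (Cone.mk X₁ x₁ b₁, Cone.mk X₂ x₂ b₂) ∈ Γ →
      (Cone.mk X₁ x₁ (lam * a₁ + mu * b₁), Cone.mk X₂ x₂ (lam * a₂ + mu * b₂)) ∈ Γ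

end Product

/-- Convexity (with scalars in `ℝ≥0`) of an `ℝ≥0∞`-valued function on a module. -/
def ConvexENN {E : Type*} [AddCommMonoid E] [SMul ℝ≥0 E] (f : E → ℝ≥0∞) : Prop :=
  ∀ (a b : E) (t : ℝ≥0), t ≤ 1 →
    f (t • a + (1 - t) • b) ≤ (t : ℝ≥0∞) * f a + ((1 - t : ℝ≥0) : ℝ≥0∞) * f b

/-- The lower semicontinuous convex envelope: the largest lsc convex function below `F`. -/
def lscConvexHull {E : Type*} [TopologicalSpace E] [AddCommMonoid E] [SMul ℝ≥0 E]
    (F : E → ℝ≥0∞) : E → ℝ≥0∞ :=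
  fun e => ⨆ (g : E → ℝ≥0∞) (_ : LowerSemicontinuous g ∧ ConvexENN g ∧ g ≤ F), g e

/-- The convex envelope: the largest convex function below `F`. -/
def convexHullFn {E : Type*} [AddCommMonoid E] [SMul ℝ≥0 E] (F : E → ℝ≥0∞) : E → ℝ≥0∞ :=
  fun e => ⨆ (g : E → ℝ≥0∞) (_ : ConvexENN g ∧ g ≤ F), g e

/-- The lower semicontinuous envelope: the largest lsc function below `F`. -/
def lscHull {E : Type*} [TopologicalSpace E] (F : E → ℝ≥0∞) : E → ℝ≥0∞ :=
  fun e => ⨆ (g : E → ℝ≥0∞) (_ : LowerSemicontinuous g ∧ g ≤ F), g e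

end UOT
namespace UOT

/-- The radial convex cone generated by a subset of the product cone: the smallest radial
convex cone containing it. -/
def radialConvexConeGen {X₁ X₂ : Type*} [TopologicalSpace X₁] [TopologicalSpace X₂]
    (G : Set (Cone X₁ × Cone X₂)) : Set (Cone X₁ × Cone X₂) :=
  ⋂₀ {Γ | IsRadialConvexCone Γ ∧ G ⊆ Γ}

set_option linter.unusedSectionVars false

section ConeBasics

variable {X : Type*} [TopologicalSpace X]

theorem Cone.exists_rep (y : Cone X) : ∃ x r, y = Cone.mk X x r := by
  obtain ⟨⟨x, r⟩, h⟩ := Quotient.exists_rep y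
  exact ⟨x, r, h.symm⟩

theorem Cone.mk_eq_mk {x y : X} {r s : ℝ≥0} :
    Cone.mk X x r = Cone.mk X y s ↔ ((x, r) = (y, s) ∨ (r = 0 ∧ s = 0)) :=
  ⟨fun h => Quotient.exact h, fun h => Quotient.sound h⟩

theorem Cone.mk_zero (x y : X) : Cone.mk X x 0 = Cone.mk X y 0 :=
  Quotient.sound (Or.inr ⟨rfl, rfl⟩)

@[simp] theorem Cone.radius_mk (x : X) (r : ℝ≥0) : Cone.radius X (Cone.mk X x r) = r := rfl

theorem Cone.basePt_mk [Nonempty X] {x : X} {r : ℝ≥0} (h : r ≠ 0) :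
    Cone.basePt X (Cone.mk X x r) = x := by
  show (if r = 0 then Classical.arbitrary X else x) = x
  simp [h]

theorem Cone.eq_mk_zero {y : Cone X} (h : Cone.radius X y = 0) (x : X) :
    y = Cone.mk X x 0 := by
  obtain ⟨x', r', rfl⟩ := Cone.exists_rep y
  rw [Cone.radius_mk] at h
  rw [h]
  exact Cone.mk_zero x' x

theorem Cone.mk_basePt_radius [Nonempty X] (y : Cone X) :
    Cone.mk X (Cone.basePt X y) (Cone.radius X y) = y := by
  obtain ⟨x, r, rfl⟩ := Cone.exists_rep y
  by_cases h : r = 0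
  · subst h
    exact Cone.mk_zero _ _
  · rw [Cone.radius_mk, Cone.basePt_mk h]

theorem Cone.isOpen_iff {U : Set (Cone X)} : IsOpen U ↔
    (IsOpen ((fun p : X × ℝ≥0 => Cone.mk X p.1 p.2) ⁻¹' U) ∧
      ∀ x : X, Cone.mk X x 0 ∈ U →
        ∃ ε : ℝ≥0, 0 < ε ∧ ∀ (y : X) (r : ℝ≥0), r < ε → Cone.mk X y r ∈ U) :=
  Iff.rfl

theorem Cone.continuous_mk : Continuous fun p : X × ℝ≥0 => Cone.mk X p.1 p.2 := by
  rw [continuous_def]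
  intro U hU
  exact (Cone.isOpen_iff.mp hU).1

theorem Cone.continuous_radius : Continuous (Cone.radius X) := by
  rw [continuous_def]
  intro U hU
  rw [Cone.isOpen_iff]
  constructor
  · exact hU.preimage continuous_snd
  · intro x hx
    have h0 : U ∈ 𝓝 (0 : ℝ≥0) := hU.mem_nhds hx
    obtain ⟨ε, hε, hb⟩ := Metric.mem_nhds_iff.mp h0
    refine ⟨ε.toNNReal, by simp [hε], fun y r hr => ?_⟩
    apply hb
    rw [Metric.mem_ball, NNReal.dist_eq]
    have : (r : ℝ) < ε := by
      rw [Real.lt_toNNReal_iff_coe_lt] at hr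
      exact hr
    simpa using this

theorem Cone.exists_strip {U : Set (Cone X)} (hU : IsOpen U) {x : X}
    (hx : Cone.mk X x 0 ∈ U) :
    ∃ ε : ℝ≥0, 0 < ε ∧ ∀ (y : X) (r : ℝ≥0), r < ε → Cone.mk X y r ∈ U :=
  (Cone.isOpen_iff.mp hU).2 x hx

theorem Cone.isOpen_basePtSet [Nonempty X] {V : Set X} (hV : IsOpen V) :
    IsOpen {z : Cone X | Cone.radius X z ≠ 0 ∧ Cone.basePt X z ∈ V} := by
  rw [Cone.isOpen_iff]
  constructor
  · have : (fun p : X × ℝ≥0 => Cone.mk X p.1 p.2) ⁻¹'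
        {z : Cone X | Cone.radius X z ≠ 0 ∧ Cone.basePt X z ∈ V}
        = {p : X × ℝ≥0 | p.2 ≠ 0} ∩ {p : X × ℝ≥0 | p.1 ∈ V} := by
      ext ⟨a, b⟩
      simp only [Set.mem_preimage, Set.mem_setOf_eq, Set.mem_inter_iff, Cone.radius_mk]
      constructor
      · rintro ⟨h1, h2⟩
        exact ⟨h1, by rwa [Cone.basePt_mk h1] at h2⟩
      · rintro ⟨h1, h2⟩
        exact ⟨h1, by rwa [Cone.basePt_mk h1]⟩
    rw [this]
    exact (isOpen_ne.preimage continuous_snd).inter (hV.preimage continuous_fst)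
  · intro x hx
    exact absurd (Cone.radius_mk x 0) hx.1

theorem Cone.continuousAt_basePt [Nonempty X] {z : Cone X} (h : Cone.radius X z ≠ 0) :
    ContinuousAt (Cone.basePt X) z := by
  rw [ContinuousAt, Filter.tendsto_def]
  intro V hV
  rcases mem_nhds_iff.mp hV with ⟨V', hV'sub, hV'open, hzV'⟩
  exact Filter.mem_of_superset ((Cone.isOpen_basePtSet hV'open).mem_nhds ⟨h, hzV'⟩)
    (fun w hw => hV'sub hw.2)

instance Cone.t2Space [T2Space X] : T2Space (Cone X) := by
  constructor
  intro p q hpq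
  obtain ⟨x, r, rfl⟩ := Cone.exists_rep p
  obtain ⟨y, s, rfl⟩ := Cone.exists_rep q
  by_cases hrs : r = s
  · subst hrs
    have hr : r ≠ 0 := by
      intro h0
      subst h0
      exact hpq (Cone.mk_zero x y)
    have hxy : x ≠ y := by
      intro h
      subst h
      exact hpq rfl
    obtain ⟨U, V, hU, hV, hxU, hyV, hUV⟩ := t2_separation hxy
    haveI : Nonempty X := ⟨x⟩
    refine ⟨{z | Cone.radius X z ≠ 0 ∧ Cone.basePt X z ∈ U},
      {z | Cone.radius X z ≠ 0 ∧ Cone.basePt X z ∈ V},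
      Cone.isOpen_basePtSet hU, Cone.isOpen_basePtSet hV,
      ⟨by simpa using hr, by rwa [Cone.basePt_mk hr]⟩,
      ⟨by simpa using hr, by rwa [Cone.basePt_mk hr]⟩, ?_⟩
    rw [Set.disjoint_left]
    rintro z ⟨_, hzU⟩ ⟨_, hzV⟩
    exact Set.disjoint_left.mp hUV hzU hzV
  · obtain ⟨U, V, hU, hV, hrU, hsV, hUV⟩ := t2_separation hrs
    exact ⟨Cone.radius X ⁻¹' U, Cone.radius X ⁻¹' V,
      hU.preimage Cone.continuous_radius, hV.preimage Cone.continuous_radius,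
      by simpa using hrU, by simpa using hsV, hUV.preimage _⟩

end ConeBasics

section ConeSum

variable {X : Type*} [TopologicalSpace X] [Nonempty X] {n : ℕ}

/-- A radial combination of points of the cone sharing a common base point. -/
def coneSum (z : Fin n → Cone X) (lam : Fin n → ℝ≥0) : Cone X :=
  Cone.mk X
    (if h : ∃ i, Cone.radius X (z i) ≠ 0 then Cone.basePt X (z h.choose)
      else Classical.arbitrary X)
    (∑ i, lam i * Cone.radius X (z i))

theorem coneSum_eq {z : Fin n → Cone X} (lam : Fin n → ℝ≥0) {x : X}
    (hx : ∀ i, z i = Cone.mk X x (Cone.radius X (z i))) :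
    coneSum z lam = Cone.mk X x (∑ i, lam i * Cone.radius X (z i)) := by
  unfold coneSum
  split_ifs with h
  · have hb : Cone.basePt X (z h.choose) = x := by
      conv_lhs => rw [hx h.choose]
      exact Cone.basePt_mk h.choose_spec
    rw [hb]
  · push_neg at h
    have hsum : (∑ i, lam i * Cone.radius X (z i)) = 0 :=
      Finset.sum_eq_zero fun i _ => by rw [h i, mul_zero]
    rw [hsum]
    exact Cone.mk_zero _ _

/-- Compatibility: all points of the family share a common base point. -/
def ConeCompat (z : Fin n → Cone X) : Prop :=
  ∀ i j, Cone.radius X (z i) ≠ 0 → Cone.radius X (z j) ≠ 0 →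
    Cone.basePt X (z i) = Cone.basePt X (z j)

theorem ConeCompat.exists_base {z : Fin n → Cone X} (h : ConeCompat z) :
    ∃ x, ∀ i, z i = Cone.mk X x (Cone.radius X (z i)) := by
  by_cases hz : ∃ j, Cone.radius X (z j) ≠ 0
  · obtain ⟨j, hj⟩ := hz
    refine ⟨Cone.basePt X (z j), fun i => ?_⟩
    by_cases hi : Cone.radius X (z i) = 0
    · rw [hi]
      exact Cone.eq_mk_zero hi _
    · rw [← h i j hi hj]
      exact (Cone.mk_basePt_radius (z i)).symm
  · push_neg at hz
    refine ⟨Classical.arbitrary X, fun i => ?_⟩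
    rw [hz i]
    exact Cone.eq_mk_zero (hz i) _

theorem conecompat_of_mk {x : X} (r : Fin n → ℝ≥0) :
    ConeCompat (fun i => Cone.mk X x (r i)) := by
  intro i j hi hj
  rw [Cone.radius_mk] at hi hj
  rw [Cone.basePt_mk hi, Cone.basePt_mk hj]

theorem isClosed_coneCompat [T2Space X] :
    IsClosed {z : Fin n → Cone X | ConeCompat z} := by
  have hrw : {z : Fin n → Cone X | ConeCompat z} = ⋂ i, ⋂ j,
      {z : Fin n → Cone X | Cone.radius X (z i) ≠ 0 → Cone.radius X (z j) ≠ 0 →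
        Cone.basePt X (z i) = Cone.basePt X (z j)} := by
    ext z
    simp [ConeCompat, Set.mem_iInter]
  rw [hrw]
  refine isClosed_iInter fun i => isClosed_iInter fun j => ?_
  rw [← isOpen_compl_iff, isOpen_iff_mem_nhds]
  intro z hz
  simp only [Set.mem_compl_iff, Set.mem_setOf_eq, not_forall] at hz
  obtain ⟨hi, hj, hne⟩ := hz
  obtain ⟨U, V, hU, hV, hbU, hbV, hUV⟩ := t2_separation hne
  have hci : ContinuousAt (fun w : Fin n → Cone X => Cone.basePt X (w i)) z :=
    (Cone.continuousAt_basePt hi).comp (f := fun w : Fin n → Cone X => w i)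
      (continuous_apply i).continuousAt
  have hcj : ContinuousAt (fun w : Fin n → Cone X => Cone.basePt X (w j)) z :=
    (Cone.continuousAt_basePt hj).comp (f := fun w : Fin n → Cone X => w j)
      (continuous_apply j).continuousAt
  have hri : {w : Fin n → Cone X | Cone.radius X (w i) ≠ 0} ∈ 𝓝 z :=
    (isOpen_ne.preimage (Cone.continuous_radius.comp (continuous_apply i))).mem_nhds hi
  have hrj : {w : Fin n → Cone X | Cone.radius X (w j) ≠ 0} ∈ 𝓝 z :=
    (isOpen_ne.preimage (Cone.continuous_radius.comp (continuous_apply j))).mem_nhds hj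
  filter_upwards [hci.preimage_mem_nhds (hU.mem_nhds hbU),
    hcj.preimage_mem_nhds (hV.mem_nhds hbV), hri, hrj] with w hw1 hw2 hw3 hw4
  simp only [Set.mem_compl_iff, Set.mem_setOf_eq, not_forall]
  refine ⟨hw3, hw4, fun h => ?_⟩
  have h1 : Cone.basePt X (w i) ∈ U := hw1
  have h2 : Cone.basePt X (w j) ∈ V := hw2
  rw [h] at h1
  exact Set.disjoint_left.mp hUV h1 h2

theorem continuous_coneSumRadius :
    Continuous (fun p : (Fin n → Cone X) × (Fin n → ℝ≥0) =>
      ∑ i, p.2 i * Cone.radius X (p.1 i)) := by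
  apply continuous_finset_sum
  intro i _
  exact ((continuous_apply i).comp continuous_snd).mul
    (Cone.continuous_radius.comp ((continuous_apply i).comp continuous_fst))

theorem continuousOn_coneSum :
    ContinuousOn (fun p : (Fin n → Cone X) × (Fin n → ℝ≥0) => coneSum p.1 p.2)
      {p | ConeCompat p.1} := by
  intro p₀ hp₀
  by_cases hS : (∑ i, p₀.2 i * Cone.radius X (p₀.1 i)) = 0
  · rw [ContinuousWithinAt, Filter.tendsto_def]
    intro U hU
    apply mem_nhdsWithin_of_mem_nhds
    rcases mem_nhds_iff.mp hU with ⟨U', hU'sub, hU'open, hmem⟩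
    have hmem0 : Cone.mk X (Classical.arbitrary X) 0 ∈ U' := by
      have hval : coneSum p₀.1 p₀.2 = Cone.mk X (Classical.arbitrary X) 0 := by
        unfold coneSum
        rw [hS]
        exact Cone.mk_zero _ _
      rw [← hval]
      exact hmem
    obtain ⟨ε, hε, hstrip⟩ := Cone.exists_strip hU'open hmem0
    have hN : {p : (Fin n → Cone X) × (Fin n → ℝ≥0) |
        (∑ i, p.2 i * Cone.radius X (p.1 i)) < ε} ∈ 𝓝 p₀ := by
      refine (IsOpen.mem_nhds ?_ ?_)
      · exact isOpen_Iio.preimage continuous_coneSumRadius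
      · simpa [hS] using hε
    refine Filter.mem_of_superset hN (fun p hp => ?_)
    exact hU'sub (hstrip _ _ hp)
  · obtain ⟨k, hk⟩ : ∃ k, Cone.radius X (p₀.1 k) ≠ 0 := by
      by_contra h
      push_neg at h
      exact hS (Finset.sum_eq_zero fun i _ => by rw [h i, mul_zero])
    have hg : ContinuousAt (fun p : (Fin n → Cone X) × (Fin n → ℝ≥0) =>
        Cone.mk X (Cone.basePt X (p.1 k)) (∑ i, p.2 i * Cone.radius X (p.1 i))) p₀ :=
      Cone.continuous_mk.continuousAt.comp
        (ContinuousAt.prodMk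
          ((Cone.continuousAt_basePt hk).comp
            (f := fun p : (Fin n → Cone X) × (Fin n → ℝ≥0) => p.1 k)
            (((continuous_apply k).comp continuous_fst).continuousAt))
          continuous_coneSumRadius.continuousAt)
  -- auxiliary: on compatible families with nonvanishing k-th radius, coneSum has closed form
    have key : ∀ p : (Fin n → Cone X) × (Fin n → ℝ≥0), ConeCompat p.1 →
        Cone.radius X (p.1 k) ≠ 0 →
        coneSum p.1 p.2 = Cone.mk X (Cone.basePt X (p.1 k))
          (∑ i, p.2 i * Cone.radius X (p.1 i)) := by
      intro p hpc hpk
      obtain ⟨x, hx⟩ := ConeCompat.exists_base hpc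
      rw [coneSum_eq _ hx]
      have hb : Cone.basePt X (p.1 k) = x := by
        conv_lhs => rw [hx k]
        exact Cone.basePt_mk hpk
      rw [hb]
    refine hg.continuousWithinAt.congr_of_eventuallyEq ?_ ?_
    · have hN : {p : (Fin n → Cone X) × (Fin n → ℝ≥0) |
          Cone.radius X (p.1 k) ≠ 0} ∈ 𝓝 p₀ :=
        (isOpen_ne.preimage
          (Cone.continuous_radius.comp ((continuous_apply k).comp continuous_fst))).mem_nhds hk
      filter_upwards [mem_nhdsWithin_of_mem_nhds hN, self_mem_nhdsWithin] with p hpk hpc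
      exact key p hpc hpk
    · exact key p₀ hp₀ hk

end ConeSum

section GenSet

variable {X : Type*} [TopologicalSpace X]

theorem Cone.mk_inj_radius {u x : X} {A a : ℝ≥0} (h : Cone.mk X x a = Cone.mk X u A) :
    a = A := by
  have := congrArg (Cone.radius X) h
  simpa using this

theorem Cone.mk_base_or {u x : X} {A a : ℝ≥0} (h : Cone.mk X x a = Cone.mk X u A) :
    x = u ∨ a = 0 := by
  rcases Cone.mk_eq_mk.mp h with h' | ⟨h1, _⟩
  · rw [Prod.mk.injEq] at h'
    exact Or.inl h'.1
  · exact Or.inr h1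

theorem Cone.mk_mul_eq {u x : X} {A a : ℝ≥0} (h : Cone.mk X x a = Cone.mk X u A)
    (c : ℝ≥0) : Cone.mk X x (c * a) = Cone.mk X u (c * A) := by
  rcases Cone.mk_eq_mk.mp h with h' | ⟨h1, h2⟩
  · rw [Prod.mk.injEq] at h'
    rw [h'.1, h'.2]
  · rw [h1, h2, mul_zero]
    exact Cone.mk_zero _ _

end GenSet

section GenSet2

variable {X₁ X₂ : Type*} [TopologicalSpace X₁] [TopologicalSpace X₂]
  [Nonempty X₁] [Nonempty X₂]

/-- `n`-fold radial conical combinations of elements of `G` with a common base pair. -/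
def genSet (G : Set (Cone X₁ × Cone X₂)) (n : ℕ) : Set (Cone X₁ × Cone X₂) :=
  {p | ∃ (x₁ : X₁) (x₂ : X₂) (r s lam : Fin n → ℝ≥0),
    (∀ i, (Cone.mk X₁ x₁ (r i), Cone.mk X₂ x₂ (s i)) ∈ G) ∧
    p = (Cone.mk X₁ x₁ (∑ i, lam i * r i), Cone.mk X₂ x₂ (∑ i, lam i * s i))}

theorem genSet_mono {G G' : Set (Cone X₁ × Cone X₂)} (h : G ⊆ G') (n : ℕ) :
    genSet G n ⊆ genSet G' n := by
  rintro p ⟨x₁, x₂, r, s, lam, hmem, rfl⟩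
  exact ⟨x₁, x₂, r, s, lam, fun i => h (hmem i), rfl⟩

theorem genSet_scale {G : Set (Cone X₁ × Cone X₂)} {n : ℕ} {x₁ : X₁} {x₂ : X₂}
    {a₁ a₂ : ℝ≥0} (c : ℝ≥0)
    (hp : (Cone.mk X₁ x₁ a₁, Cone.mk X₂ x₂ a₂) ∈ genSet G n) :
    (Cone.mk X₁ x₁ (c * a₁), Cone.mk X₂ x₂ (c * a₂)) ∈ genSet G n := by
  obtain ⟨u₁, u₂, r, s, lam, hmem, heq⟩ := hp
  rw [Prod.mk.injEq] at heq
  refine ⟨u₁, u₂, r, s, fun i => c * lam i, hmem, ?_⟩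
  have e1 : (∑ i, (c * lam i) * r i) = c * ∑ i, lam i * r i := by
    rw [Finset.mul_sum]
    exact Finset.sum_congr rfl fun i _ => (mul_assoc _ _ _)
  have e2 : (∑ i, (c * lam i) * s i) = c * ∑ i, lam i * s i := by
    rw [Finset.mul_sum]
    exact Finset.sum_congr rfl fun i _ => (mul_assoc _ _ _)
  rw [Prod.mk.injEq]
  exact ⟨by rw [e1]; exact Cone.mk_mul_eq heq.1 c, by rw [e2]; exact Cone.mk_mul_eq heq.2 c⟩

theorem genSet_rebase {G : Set (Cone X₁ × Cone X₂)} {n : ℕ} {x₁ : X₁} {x₂ : X₂}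
    {a₁ a₂ : ℝ≥0}
    (hp : (Cone.mk X₁ x₁ a₁, Cone.mk X₂ x₂ a₂) ∈ genSet G n)
    (hnz : ¬ (a₁ = 0 ∧ a₂ = 0)) :
    ∃ r s lam : Fin n → ℝ≥0,
      (∀ i, (Cone.mk X₁ x₁ (r i), Cone.mk X₂ x₂ (s i)) ∈ G) ∧
      a₁ = ∑ i, lam i * r i ∧ a₂ = ∑ i, lam i * s i := by
  obtain ⟨u₁, u₂, r, s, lam, hmem, heq⟩ := hp
  rw [Prod.mk.injEq] at heq
  obtain ⟨h1, h2⟩ := heq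
  have hA : a₁ = ∑ i, lam i * r i := Cone.mk_inj_radius h1
  have hB : a₂ = ∑ i, lam i * s i := Cone.mk_inj_radius h2
  obtain ⟨k, hk⟩ : ∃ k, lam k ≠ 0 := by
    by_contra h
    push_neg at h
    refine hnz ⟨?_, ?_⟩
    · rw [hA]
      exact Finset.sum_eq_zero fun i _ => by rw [h i, zero_mul]
    · rw [hB]
      exact Finset.sum_eq_zero fun i _ => by rw [h i, zero_mul]
  set J : Fin n → Fin n := fun i => if lam i = 0 then k else i with hJ
  have hJi : ∀ i, lam (J i) ≠ 0 := by
    intro i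
    by_cases hli : lam i = 0
    · simp only [hJ, if_pos hli]
      exact hk
    · simp only [hJ, if_neg hli]
      exact hli
  refine ⟨fun i => r (J i), fun i => s (J i), lam, ?_, ?_, ?_⟩
  · intro i
    have e1 : Cone.mk X₁ u₁ (r (J i)) = Cone.mk X₁ x₁ (r (J i)) := by
      rcases Cone.mk_base_or h1 with hx | h0
      · rw [hx]
      · have hA0 : (∑ i, lam i * r i) = 0 := by rw [← hA, h0]
        have hterm := (Finset.sum_eq_zero_iff.mp hA0) (J i) (Finset.mem_univ _)
        have hr0 : r (J i) = 0 := by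
          rcases mul_eq_zero.mp hterm with h | h
          · exact absurd h (hJi i)
          · exact h
        rw [hr0]
        exact Cone.mk_zero _ _
    have e2 : Cone.mk X₂ u₂ (s (J i)) = Cone.mk X₂ x₂ (s (J i)) := by
      rcases Cone.mk_base_or h2 with hx | h0
      · rw [hx]
      · have hB0 : (∑ i, lam i * s i) = 0 := by rw [← hB, h0]
        have hterm := (Finset.sum_eq_zero_iff.mp hB0) (J i) (Finset.mem_univ _)
        have hs0 : s (J i) = 0 := by
          rcases mul_eq_zero.mp hterm with h | h
          · exact absurd h (hJi i)
          · exact h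
        rw [hs0]
        exact Cone.mk_zero _ _
    rw [← e1, ← e2]
    exact hmem (J i)
  · rw [hA]
    refine Finset.sum_congr rfl fun i _ => ?_
    by_cases hli : lam i = 0
    · rw [hli, zero_mul, zero_mul]
    · simp [hJ, if_neg hli]
  · rw [hB]
    refine Finset.sum_congr rfl fun i _ => ?_
    by_cases hli : lam i = 0
    · rw [hli, zero_mul, zero_mul]
    · simp [hJ, if_neg hli]

theorem genSet_concat {G : Set (Cone X₁ × Cone X₂)} {N M : ℕ} {x₁ : X₁} {x₂ : X₂}
    {r s lam : Fin N → ℝ≥0} {r' s' mu : Fin M → ℝ≥0}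
    (h1 : ∀ i, (Cone.mk X₁ x₁ (r i), Cone.mk X₂ x₂ (s i)) ∈ G)
    (h2 : ∀ i, (Cone.mk X₁ x₁ (r' i), Cone.mk X₂ x₂ (s' i)) ∈ G)
    (c d : ℝ≥0) :
    (Cone.mk X₁ x₁ (c * ∑ i, lam i * r i + d * ∑ i, mu i * r' i),
     Cone.mk X₂ x₂ (c * ∑ i, lam i * s i + d * ∑ i, mu i * s' i)) ∈ genSet G (N + M) := by
  refine ⟨x₁, x₂, Fin.append r r', Fin.append s s',
    Fin.append (fun i => c * lam i) (fun i => d * mu i), ?_, ?_⟩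
  · intro i
    induction i using Fin.addCases with
    | left j => simpa [Fin.append_left] using h1 j
    | right j => simpa [Fin.append_right] using h2 j
  · have e1 : (∑ i, Fin.append (fun i => c * lam i) (fun i => d * mu i) i *
        Fin.append r r' i)
        = c * ∑ i, lam i * r i + d * ∑ i, mu i * r' i := by
      rw [Fin.sum_univ_add]
      simp [Fin.append_left, Fin.append_right, Finset.mul_sum, mul_assoc]
    have e2 : (∑ i, Fin.append (fun i => c * lam i) (fun i => d * mu i) i *
        Fin.append s s' i)
        = c * ∑ i, lam i * s i + d * ∑ i, mu i * s' i := by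
      rw [Fin.sum_univ_add]
      simp [Fin.append_left, Fin.append_right, Finset.mul_sum, mul_assoc]
    rw [e1, e2]

theorem isRCC_iUnion_genSet (G : Set (Cone X₁ × Cone X₂)) :
    IsRadialConvexCone (⋃ n, genSet G (n + 1)) := by
  intro x₁ x₂ a₁ a₂ b₁ b₂ c d hp hq
  rw [Set.mem_iUnion] at hp hq ⊢
  obtain ⟨n, hp⟩ := hp
  obtain ⟨m, hq⟩ := hq
  by_cases hA : a₁ = 0 ∧ a₂ = 0
  · refine ⟨m, ?_⟩
    rw [hA.1, hA.2, mul_zero, zero_add, zero_add]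
    exact genSet_scale d hq
  · by_cases hB : b₁ = 0 ∧ b₂ = 0
    · refine ⟨n, ?_⟩
      rw [hB.1, hB.2, mul_zero, add_zero, add_zero]
      exact genSet_scale c hp
    · obtain ⟨r, s, lam, hmem, hA1, hA2⟩ := genSet_rebase hp hA
      obtain ⟨r', s', mu, hmem', hB1, hB2⟩ := genSet_rebase hq hB
      refine ⟨n + m + 1, ?_⟩
      have hconcat := genSet_concat (lam := lam) (mu := mu) hmem hmem' c d
      rw [← hA1, ← hA2, ← hB1, ← hB2] at hconcat
      have hcast : (n + 1) + (m + 1) = (n + m + 1) + 1 := by omega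
      rw [hcast] at hconcat
      exact hconcat

theorem genSet_subset_rcc {G Γ : Set (Cone X₁ × Cone X₂)} (hΓ : IsRadialConvexCone Γ)
    (hGΓ : G ⊆ Γ) : ∀ n, genSet G (n + 1) ⊆ Γ := by
  intro n
  induction n with
  | zero =>
    rintro p ⟨x₁, x₂, r, s, lam, hmem, rfl⟩
    have h0 := hΓ x₁ x₂ (r 0) (s 0) (r 0) (s 0) (lam 0) 0 (hGΓ (hmem 0)) (hGΓ (hmem 0))
    simpa [Fin.sum_univ_one, zero_mul, add_zero] using h0
  | succ n ih =>
    rintro p ⟨x₁, x₂, r, s, lam, hmem, rfl⟩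
    have hpart : (Cone.mk X₁ x₁ (∑ i : Fin (n + 1), lam i.castSucc * r i.castSucc),
        Cone.mk X₂ x₂ (∑ i : Fin (n + 1), lam i.castSucc * s i.castSucc)) ∈ Γ :=
      ih ⟨x₁, x₂, fun i => r i.castSucc, fun i => s i.castSucc, fun i => lam i.castSucc,
        fun i => hmem i.castSucc, rfl⟩
    have hlast := hGΓ (hmem (Fin.last (n + 1)))
    have h0 := hΓ x₁ x₂ _ _ (r (Fin.last (n + 1))) (s (Fin.last (n + 1))) 1
      (lam (Fin.last (n + 1))) hpart hlast
    rw [Fin.sum_univ_castSucc (f := fun i => lam i * r i),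
      Fin.sum_univ_castSucc (f := fun i => lam i * s i)]
    simpa [one_mul] using h0

theorem subset_genSet_one {G : Set (Cone X₁ × Cone X₂)} : G ⊆ genSet G 1 := by
  intro p hp
  obtain ⟨y1, y2⟩ := p
  obtain ⟨x₁, r₁, rfl⟩ := Cone.exists_rep y1
  obtain ⟨x₂, r₂, rfl⟩ := Cone.exists_rep y2
  exact ⟨x₁, x₂, fun _ => r₁, fun _ => r₂, fun _ => 1, fun _ => hp,
    by simp [Fin.sum_univ_one]⟩

theorem radialConvexConeGen_eq (G : Set (Cone X₁ × Cone X₂)) :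
    radialConvexConeGen G = ⋃ n, genSet G (n + 1) := by
  apply subset_antisymm
  · exact Set.sInter_subset_of_mem ⟨isRCC_iUnion_genSet G,
      subset_genSet_one.trans (Set.subset_iUnion (fun n => genSet G (n + 1)) 0)⟩
  · refine Set.iUnion_subset fun n p hp => ?_
    exact Set.mem_sInter.mpr fun Γ hΓ => genSet_subset_rcc hΓ.1 hΓ.2 n hp

end GenSet2

section Sigma

variable {X₁ X₂ : Type*} [TopologicalSpace X₁] [TopologicalSpace X₂]
  [Nonempty X₁] [Nonempty X₂] [T2Space X₁] [T2Space X₂]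

/-- Bounded-coefficient version of `genSet`. -/
def genSetB (G : Set (Cone X₁ × Cone X₂)) (n : ℕ) (M : ℝ≥0) : Set (Cone X₁ × Cone X₂) :=
  {p | ∃ (x₁ : X₁) (x₂ : X₂) (r s lam : Fin n → ℝ≥0),
    (∀ i, lam i ≤ M) ∧
    (∀ i, (Cone.mk X₁ x₁ (r i), Cone.mk X₂ x₂ (s i)) ∈ G) ∧
    p = (Cone.mk X₁ x₁ (∑ i, lam i * r i), Cone.mk X₂ x₂ (∑ i, lam i * s i))}

theorem genSet_eq_iUnion_genSetB (G : Set (Cone X₁ × Cone X₂)) (n : ℕ) :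
    genSet G n = ⋃ M : ℕ, genSetB G n (M : ℝ≥0) := by
  ext p
  constructor
  · rintro ⟨x₁, x₂, r, s, lam, hmem, rfl⟩
    obtain ⟨M, hM⟩ := exists_nat_ge (Finset.univ.sup lam)
    refine Set.mem_iUnion.mpr ⟨M, x₁, x₂, r, s, lam, fun i => ?_, hmem, rfl⟩
    exact le_trans (Finset.le_sup (Finset.mem_univ i)) hM
  · intro hp
    obtain ⟨M, x₁, x₂, r, s, lam, _, hmem, rfl⟩ := Set.mem_iUnion.mp hp
    exact ⟨x₁, x₂, r, s, lam, hmem, rfl⟩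

set_option maxHeartbeats 4000000 in
theorem isCompact_genSetB {K : Set (Cone X₁ × Cone X₂)} (hK : IsCompact K)
    (n : ℕ) (M : ℝ≥0) : IsCompact (genSetB K n M) := by
  set T : Set ((Fin n → Cone X₁ × Cone X₂) × (Fin n → ℝ≥0)) :=
    {p | (∀ i, p.1 i ∈ K) ∧ (∀ i, p.2 i ≤ M) ∧ ConeCompat (fun i => (p.1 i).1) ∧
      ConeCompat (fun i => (p.1 i).2)} with hT
  have hTcomp : IsCompact T := by
    have h1 : IsCompact {y : Fin n → Cone X₁ × Cone X₂ | ∀ i, y i ∈ K} := by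
      have h := isCompact_univ_pi (s := fun _ : Fin n => K) (fun _ => hK)
      have e : Set.pi Set.univ (fun _ : Fin n => K)
          = {y : Fin n → Cone X₁ × Cone X₂ | ∀ i, y i ∈ K} := by
        ext y
        simp [Set.mem_pi]
      rwa [e] at h
    have h2 : IsCompact {l : Fin n → ℝ≥0 | ∀ i, l i ≤ M} := by
      have h := isCompact_univ_pi (s := fun _ : Fin n => Set.Icc (0 : ℝ≥0) M)
        (fun _ => isCompact_Icc)
      have e : Set.pi Set.univ (fun _ : Fin n => Set.Icc (0 : ℝ≥0) M)
          = {l : Fin n → ℝ≥0 | ∀ i, l i ≤ M} := by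
        ext l
        simp only [Set.mem_univ_pi, Set.mem_Icc, Set.mem_setOf_eq]
        exact ⟨fun hl i => (hl i).2, fun hl i => ⟨zero_le, hl i⟩⟩
      rwa [e] at h
    have hcl : IsClosed {p : (Fin n → Cone X₁ × Cone X₂) × (Fin n → ℝ≥0) |
        ConeCompat (fun i => (p.1 i).1) ∧ ConeCompat (fun i => (p.1 i).2)} := by
      apply IsClosed.inter
      · exact isClosed_coneCompat.preimage
          ((continuous_pi fun i =>
            continuous_fst.comp ((continuous_apply i).comp continuous_fst)))
      · exact isClosed_coneCompat.preimage
          ((continuous_pi fun i =>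
            continuous_snd.comp ((continuous_apply i).comp continuous_fst)))
    have heq : T = ({y : Fin n → Cone X₁ × Cone X₂ | ∀ i, y i ∈ K} ×ˢ
        {l : Fin n → ℝ≥0 | ∀ i, l i ≤ M}) ∩
        {p | ConeCompat (fun i => (p.1 i).1) ∧ ConeCompat (fun i => (p.1 i).2)} := by
      ext p
      simp only [hT, Set.mem_setOf_eq, Set.mem_inter_iff, Set.mem_prod]
      tauto
    rw [heq]
    exact (h1.prod h2).inter_right hcl
  have hmap : genSetB K n M = (fun p : (Fin n → Cone X₁ × Cone X₂) × (Fin n → ℝ≥0) =>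
      (coneSum (fun i => (p.1 i).1) p.2, coneSum (fun i => (p.1 i).2) p.2)) '' T := by
    ext q
    constructor
    · rintro ⟨x₁, x₂, r, s, lam, hlam, hmem, rfl⟩
      refine ⟨(fun i => (Cone.mk X₁ x₁ (r i), Cone.mk X₂ x₂ (s i)), lam),
        ⟨hmem, hlam, conecompat_of_mk r, conecompat_of_mk s⟩, ?_⟩
      exact Prod.ext_iff.mpr ⟨coneSum_eq lam (fun _ => rfl), coneSum_eq lam (fun _ => rfl)⟩
    · rintro ⟨⟨y, lam⟩, ⟨hyK, hlam, hc1, hc2⟩, rfl⟩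
      obtain ⟨x₁, hx₁⟩ := ConeCompat.exists_base hc1
      obtain ⟨x₂, hx₂⟩ := ConeCompat.exists_base hc2
      refine ⟨x₁, x₂, fun i => Cone.radius X₁ (y i).1, fun i => Cone.radius X₂ (y i).2,
        lam, hlam, fun i => ?_, ?_⟩
      · have hyi : y i = (Cone.mk X₁ x₁ (Cone.radius X₁ (y i).1),
            Cone.mk X₂ x₂ (Cone.radius X₂ (y i).2)) :=
          Prod.ext_iff.mpr ⟨hx₁ i, hx₂ i⟩
        rw [← hyi]
        exact hyK i
      · exact Prod.ext_iff.mpr ⟨coneSum_eq lam hx₁, coneSum_eq lam hx₂⟩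
  rw [hmap]
  apply hTcomp.image_of_continuousOn
  apply ContinuousOn.prodMk
  · have hg : Continuous (fun p : (Fin n → Cone X₁ × Cone X₂) × (Fin n → ℝ≥0) =>
        ((fun i => (p.1 i).1, p.2) : (Fin n → Cone X₁) × (Fin n → ℝ≥0))) :=
      (continuous_pi fun i =>
        continuous_fst.comp ((continuous_apply i).comp continuous_fst)).prodMk
        continuous_snd
    exact ContinuousOn.comp
      (g := fun q : (Fin n → Cone X₁) × (Fin n → ℝ≥0) => coneSum q.1 q.2)
      (t := {q : (Fin n → Cone X₁) × (Fin n → ℝ≥0) | ConeCompat q.1})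
      continuousOn_coneSum hg.continuousOn (fun p hp => hp.2.2.1)
  · have hg : Continuous (fun p : (Fin n → Cone X₁ × Cone X₂) × (Fin n → ℝ≥0) =>
        ((fun i => (p.1 i).2, p.2) : (Fin n → Cone X₂) × (Fin n → ℝ≥0))) :=
      (continuous_pi fun i =>
        continuous_snd.comp ((continuous_apply i).comp continuous_fst)).prodMk
        continuous_snd
    exact ContinuousOn.comp
      (g := fun q : (Fin n → Cone X₂) × (Fin n → ℝ≥0) => coneSum q.1 q.2)
      (t := {q : (Fin n → Cone X₂) × (Fin n → ℝ≥0) | ConeCompat q.1})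
      continuousOn_coneSum hg.continuousOn (fun p hp => hp.2.2.2)

theorem isSigmaCompact_radialConvexConeGen {G : Set (Cone X₁ × Cone X₂)}
    (hG : IsSigmaCompact G) : IsSigmaCompact (radialConvexConeGen G) := by
  obtain ⟨K, hKc, hKU⟩ := hG
  have hC : ∀ m : ℕ, IsCompact (⋃ k ∈ Finset.range (m + 1), K k) := fun m =>
    (Finset.range (m + 1)).isCompact_biUnion (fun k _ => hKc k)
  have hdecomp : ∀ n, genSet G n = ⋃ m : ℕ, genSet (⋃ k ∈ Finset.range (m + 1), K k) n := by
    intro n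
    ext p
    constructor
    · rintro ⟨x₁, x₂, r, s, lam, hmem, rfl⟩
      have hex : ∀ i, ∃ k, (Cone.mk X₁ x₁ (r i), Cone.mk X₂ x₂ (s i)) ∈ K k := fun i => by
        have h := hmem i
        rw [← hKU] at h
        exact Set.mem_iUnion.mp h
      choose f hf using hex
      refine Set.mem_iUnion.mpr ⟨Finset.univ.sup f, x₁, x₂, r, s, lam, fun i => ?_, rfl⟩
      exact Set.mem_biUnion
        (Finset.mem_range.mpr (Nat.lt_succ_of_le (Finset.le_sup (Finset.mem_univ i))))
        (hf i)
    · intro hp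
      obtain ⟨m, hp⟩ := Set.mem_iUnion.mp hp
      refine genSet_mono (fun q hq => ?_) n hp
      rw [← hKU]
      obtain ⟨k, -, hk⟩ := Set.mem_iUnion₂.mp hq
      exact Set.mem_iUnion.mpr ⟨k, hk⟩
  have hfinal : radialConvexConeGen G
      = ⋃ n : ℕ, ⋃ m : ℕ, ⋃ M : ℕ,
          genSetB (⋃ k ∈ Finset.range (m + 1), K k) (n + 1) (M : ℝ≥0) := by
    rw [radialConvexConeGen_eq]
    refine Set.iUnion_congr fun n => ?_
    rw [hdecomp (n + 1)]
    exact Set.iUnion_congr fun m => genSet_eq_iUnion_genSetB _ (n + 1)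
  rw [hfinal]
  exact isSigmaCompact_iUnion _ fun n =>
    isSigmaCompact_iUnion _ fun m =>
      isSigmaCompact_iUnion _ fun M =>
        (isCompact_genSetB (hC m) (n + 1) (M : ℝ≥0)).isSigmaCompact

end Sigma

section RCCGen

variable {X₁ X₂ : Type*} [TopologicalSpace X₁] [TopologicalSpace X₂]
  [Nonempty X₁] [Nonempty X₂]

theorem subset_radialConvexConeGen (G : Set (Cone X₁ × Cone X₂)) :
    G ⊆ radialConvexConeGen G :=
  fun _ hp => Set.mem_sInter.mpr fun _ hΓ => hΓ.2 hp

theorem radialConvexConeGen_mono {G G' : Set (Cone X₁ × Cone X₂)} (h : G' ⊆ G) :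
    radialConvexConeGen G' ⊆ radialConvexConeGen G := fun p hp =>
  Set.mem_sInter.mpr fun Γ hΓ => Set.mem_sInter.mp hp Γ ⟨hΓ.1, h.trans hΓ.2⟩

theorem isRCC_radialConvexConeGen (G : Set (Cone X₁ × Cone X₂)) :
    IsRadialConvexCone (radialConvexConeGen G) := by
  rw [radialConvexConeGen_eq]
  exact isRCC_iUnion_genSet G

theorem radialConvexConeGen_self {Γ : Set (Cone X₁ × Cone X₂)}
    (h : IsRadialConvexCone Γ) : radialConvexConeGen Γ = Γ :=
  subset_antisymm (Set.sInter_subset_of_mem ⟨h, subset_rfl⟩)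
    (subset_radialConvexConeGen Γ)

theorem hcm_mono {H : Cone X₁ × Cone X₂ → ℝ≥0∞} {Γ Γ' : Set (Cone X₁ × Cone X₂)}
    (h : HCyclicallyMonotone H Γ) (hsub : Γ' ⊆ Γ) : HCyclicallyMonotone H Γ' :=
  fun N y hy σ => h N y (fun i => hsub (hy i)) σ

theorem hcm_empty (H : Cone X₁ × Cone X₂ → ℝ≥0∞) :
    HCyclicallyMonotone H (∅ : Set (Cone X₁ × Cone X₂)) := by
  intro N y hy σ
  cases N with
  | zero => simp
  | succ n => exact absurd (hy 0) (Set.notMem_empty _)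

end RCCGen

/-- The radial convex cone generated by a σ-compact subset of the product
cone is σ-compact; consequently, a finite Radon measure `α` is concentrated on a Borel set
whose generated radial convex cone is `H`-cyclically monotone iff it is concentrated on a
σ-compact `H`-cyclically monotone radial convex cone. -/
theorem generated_radial_convex_cone_sigmaCompact
    {X₁ X₂ : Type*} [TopologicalSpace X₁] [TopologicalSpace X₂]
    [T2Space X₁] [T2Space X₂] [CompletelyRegularSpace X₁] [CompletelyRegularSpace X₂]
    [MeasurableSpace X₁] [BorelSpace X₁] [MeasurableSpace X₂] [BorelSpace X₂]
    [Nonempty X₁] [Nonempty X₂]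
    (H : Cone X₁ × Cone X₂ → ℝ≥0∞) :
    (∀ G : Set (Cone X₁ × Cone X₂), IsSigmaCompact G →
      IsSigmaCompact (radialConvexConeGen G)) ∧
    (∀ α : Measure (Cone X₁ × Cone X₂), IsFiniteMeasure α → α.InnerRegular →
      ((∃ G : Set (Cone X₁ × Cone X₂), MeasurableSet G ∧ α Gᶜ = 0 ∧
          HCyclicallyMonotone H (radialConvexConeGen G)) ↔
        (∃ Γ : Set (Cone X₁ × Cone X₂), IsSigmaCompact Γ ∧ IsRadialConvexCone Γ ∧
          HCyclicallyMonotone H Γ ∧ α Γᶜ = 0))) := by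
  constructor
  · exact fun G hG => isSigmaCompact_radialConvexConeGen hG
  · intro α hfin hreg
    haveI := hfin
    constructor
    · rintro ⟨G, hGmeas, hGnull, hHCM⟩
      by_cases h0 : α G = 0
      · refine ⟨∅, isSigmaCompact_empty, ?_, hcm_empty H, ?_⟩
        · intro x₁ x₂ a₁ a₂ b₁ b₂ c d hp _
          exact absurd hp (Set.notMem_empty _)
        · rw [Set.compl_empty]
          have hle : α Set.univ ≤ α G + α Gᶜ := by
            rw [← Set.union_compl_self G]
            exact measure_union_le G Gᶜ
          rw [h0, hGnull, add_zero] at hle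
          exact le_antisymm hle (zero_le)
      · have hGfin : α G ≠ ⊤ := (measure_lt_top α G).ne
        have hKn : ∀ nn : ℕ, ∃ Kc, Kc ⊆ G ∧ IsCompact Kc ∧
            α G < α Kc + (((nn : ℕ) + 1 : ℕ) : ℝ≥0∞)⁻¹ := by
          intro nn
          refine hreg.innerRegular.exists_subset_lt_add isCompact_empty hGmeas hGfin ?_
          simp
        choose Kc hKsub hKcomp hKlt using hKn
        set G' := ⋃ nn, Kc nn with hG'
        have hG'sub : G' ⊆ G := Set.iUnion_subset hKsub
        have hG'sc : IsSigmaCompact G' := isSigmaCompact_iUnion_of_isCompact _ hKcomp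
        have hG'meas : MeasurableSet G' :=
          MeasurableSet.iUnion fun nn => (hKcomp nn).isClosed.measurableSet
        have hle : α G ≤ α G' := by
          refine ENNReal.le_of_forall_pos_le_add fun ε hε _ => ?_
          have hε' : ((ε : ℝ≥0∞)) ≠ 0 := by
            simpa using hε.ne'
          obtain ⟨n, hn⟩ := ENNReal.exists_inv_nat_lt hε'
          cases n with
          | zero =>
            simp at hn
          | succ m =>
            have h1 := hKlt m
            have h2 : α (Kc m) ≤ α G' := measure_mono (Set.subset_iUnion Kc m)
            calc α G ≤ α (Kc m) + (((m : ℕ) + 1 : ℕ) : ℝ≥0∞)⁻¹ := h1.le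
              _ ≤ α G' + (ε : ℝ≥0∞) := by
                  refine add_le_add h2 ?_
                  have : (((m : ℕ) + 1 : ℕ) : ℝ≥0∞)⁻¹ = ((m + 1 : ℕ) : ℝ≥0∞)⁻¹ := by
                    norm_num
                  rw [this]
                  exact (le_of_lt hn)
        have hdiff : α (G \ G') = 0 := by
          rw [measure_diff hG'sub hG'meas.nullMeasurableSet
            ((measure_lt_top α G').ne)]
          exact tsub_eq_zero_of_le hle
        refine ⟨radialConvexConeGen G', isSigmaCompact_radialConvexConeGen hG'sc,
          isRCC_radialConvexConeGen G',
          hcm_mono hHCM (radialConvexConeGen_mono hG'sub), ?_⟩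
        have hsub : (radialConvexConeGen G')ᶜ ⊆ Gᶜ ∪ (G \ G') := by
          intro z hz
          by_cases hzG : z ∈ G
          · exact Or.inr ⟨hzG, fun hzG' => hz (subset_radialConvexConeGen G' hzG')⟩
          · exact Or.inl hzG
        refine le_antisymm ?_ (zero_le)
        calc α (radialConvexConeGen G')ᶜ ≤ α (Gᶜ ∪ (G \ G')) := measure_mono hsub
          _ ≤ α Gᶜ + α (G \ G') := measure_union_le _ _
          _ = 0 := by rw [hGnull, hdiff, add_zero]
    · rintro ⟨Γ, hΓsc, hΓrcc, hΓhcm, hΓnull⟩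
      refine ⟨Γ, ?_, hΓnull, ?_⟩
      · obtain ⟨K, hKc, rfl⟩ := hΓsc
        exact MeasurableSet.iUnion fun n => (hKc n).isClosed.measurableSet
      · rw [radialConvexConeGen_self hΓrcc]
        exact hΓhcm

end UOT
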